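/- arXiv:1605.06702 — 2 statements merged into one kernel-verified Lean document; each statement's English description precedes it below -/
import Mathlib

section
/- Let H be a finite abelian group and F a field, and let D_H : H × H × H → F be defined by D_H(x,y,z) = 1 if x + y + z = 0 and 0 otherwise. If M ⊆ S × T × U is a tricolored sum-free set in H, then |M| ≤ slicerank(D_H). -/
open Finset

/-- A slice term is a function of three variables that factors as a
function of two of the variables times a function of the remaining one. -/
def IsSliceTerm {X Y Z 𝔽 : Type*} [Field 𝔽] (t : X → Y → Z → 𝔽) : Prop :=
  (∃ (f : X → Y → 𝔽) (g : Z → 𝔽), ∀ x y z, t x y z = f x y * g z) ∨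
  (∃ (f : X → Z → 𝔽) (g : Y → 𝔽), ∀ x y z, t x y z = f x z * g y) ∨
  (∃ (f : Y → Z → 𝔽) (g : X → 𝔽), ∀ x y z, t x y z = f y z * g x)

/-- The slice rank of a function `X × Y × Z → 𝔽`: the least number of slice
terms needed to express it. -/
noncomputable def sliceRank {X Y Z 𝔽 : Type*} [Field 𝔽] (T : X → Y → Z → 𝔽) : ℕ :=
  sInf {k | ∃ t : Fin k → X → Y → Z → 𝔽,
    (∀ i, IsSliceTerm (t i)) ∧ ∀ x y z, T x y z = ∑ i, t i x y z}

/-- The tensor rank of a function `X × Y × Z → 𝔽`. -/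
noncomputable def tensorRank {X Y Z 𝔽 : Type*} [Field 𝔽] (T : X → Y → Z → 𝔽) : ℕ :=
  sInf {k | ∃ (f : Fin k → X → 𝔽) (g : Fin k → Y → 𝔽) (h : Fin k → Z → 𝔽),
    ∀ x y z, T x y z = ∑ i, f i x * g i y * h i z}

/-- The triangle rank of a function `X × Y × Z → 𝔽`. -/
noncomputable def triangleRank {X Y Z 𝔽 : Type*} [Field 𝔽] (T : X → Y → Z → 𝔽) : ℕ :=
  sInf {k | ∃ (f : Fin k → X → 𝔽) (g : Fin k → Y → 𝔽) (h : Fin k → Z → 𝔽)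
      (r : Fin k → Fin k → Fin k → 𝔽),
    ∀ x y z, T x y z = ∑ a : Fin k, ∑ b : Fin k, ∑ c : Fin k,
      if (a : ℕ) + (b : ℕ) + (c : ℕ) < k then r a b c * f a x * g b y * h c z else 0}

/-- A tricolored sum-free set in an abelian group `H`, encoded as the
3-dimensional perfect matching `M` itself (a finite set of triples):
every triple of `M` sums to zero, and whenever a "mixed" triple
`(p.1, q.2.1, r.2.2)` with `p q r ∈ M` sums to zero we must have `p = q = r`
(this encodes both the perfect-matching property and that no other triple of
`S × T × U` sums to zero, where `S, T, U` are the projections of `M`). -/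
def IsTricoloredSumFree {H : Type*} [AddCommGroup H] (M : Finset (H × H × H)) : Prop :=
  (∀ p ∈ M, p.1 + p.2.1 + p.2.2 = 0) ∧
  (∀ p ∈ M, ∀ q ∈ M, ∀ r ∈ M, p.1 + q.2.1 + r.2.2 = 0 → p = q ∧ q = r)

/-!
Tao's slice-rank argument. On the triples of `M`, `D_H (p.1, q.2.1, r.2.2)` is the diagonal
tensor `[p = q = r]`, and restricting a slice decomposition of `D_H` to these triples keeps its
length, so it suffices that a diagonal tensor on `A` with nonzero diagonal has slice rank at
least `|A|`. Given a decomposition into `k` slice terms, `k₁` of which split off the last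
variable as `f i (x, y) * g i z`, choose `φ ⊥ g i` for all those `i` with `|supp φ| ≥ |A| - k₁`
(every subspace of `𝔽^A` contains a vector whose support is at least its dimension).
Contracting the last variable against `φ` kills those `k₁` terms and turns every other term
into a matrix of rank at most one, while the diagonal tensor becomes `diagonal (d * φ)`, of
rank `|supp φ|`. Hence `|A| - k₁ ≤ k - k₁`.
-/

open Matrix Module

theorem IsSliceTerm.comp {X Y Z X' Y' Z' 𝔽 : Type*} [Field 𝔽] {t : X → Y → Z → 𝔽}
    (ht : IsSliceTerm t) (a : X' → X) (b : Y' → Y) (c : Z' → Z) :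
    IsSliceTerm fun x y z => t (a x) (b y) (c z) := by
  rcases ht with ⟨f, g, h⟩ | ⟨f, g, h⟩ | ⟨f, g, h⟩
  · exact Or.inl ⟨fun x y => f (a x) (b y), g ∘ c, fun _ _ _ => h _ _ _⟩
  · exact Or.inr <| Or.inl ⟨fun x z => f (a x) (c z), g ∘ b, fun _ _ _ => h _ _ _⟩
  · exact Or.inr <| Or.inr ⟨fun y z => f (b y) (c z), g ∘ a, fun _ _ _ => h _ _ _⟩

section SliceRank

variable {X Y Z 𝔽 : Type*} [Field 𝔽]

theorem exists_sliceTerm_sum_fin_card [Fintype Z] [DecidableEq Z] (T : X → Y → Z → 𝔽) :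
    ∃ t : Fin (Fintype.card Z) → X → Y → Z → 𝔽,
      (∀ i, IsSliceTerm (t i)) ∧ ∀ x y z, T x y z = ∑ i, t i x y z := by
  let e := (Fintype.equivFin Z).symm
  refine ⟨fun i x y z => T x y (e i) * if z = e i then 1 else 0,
    fun i => Or.inl ⟨fun x y => T x y (e i), fun z => if z = e i then 1 else 0,
      fun _ _ _ => rfl⟩, fun x y z => ?_⟩
  rw [e.sum_comp fun c => T x y c * if z = c then 1 else 0]
  simp

theorem le_sliceRank [Fintype Z] {T : X → Y → Z → 𝔽} {n : ℕ}
    (h : ∀ k (t : Fin k → X → Y → Z → 𝔽), (∀ i, IsSliceTerm (t i)) →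
      (∀ x y z, T x y z = ∑ i, t i x y z) → n ≤ k) :
    n ≤ sliceRank T := by
  classical
  obtain ⟨t, ht, hT⟩ := exists_sliceTerm_sum_fin_card T
  exact le_csInf ⟨_, t, ht, hT⟩ fun k ⟨t, ht, hT⟩ => h k t ht hT

end SliceRank

namespace Matrix

variable {ι m n K : Type*} [Fintype n] [Field K]

theorem rank_add_le (A B : Matrix m n K) : (A + B).rank ≤ A.rank + B.rank := by
  rw [rank, rank, rank, mulVecLin_add]
  exact (Submodule.finrank_mono (LinearMap.range_add_le _ _)).trans
    (Submodule.finrank_add_le_finrank_add_finrank _ _)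

theorem rank_sum_le (s : Finset ι) (A : ι → Matrix m n K) :
    (∑ i ∈ s, A i).rank ≤ ∑ i ∈ s, (A i).rank :=
  Finset.le_sum_of_subadditive (fun A : Matrix m n K => A.rank) rank_zero.le rank_add_le s A

end Matrix

namespace Submodule

variable {α 𝔽 : Type*} [Fintype α] [Field 𝔽]

theorem exists_finrank_le_card_forall_exists_mem_eqOn (W : Submodule 𝔽 (α → 𝔽)) :
    ∃ P : Finset α, finrank 𝔽 W ≤ P.card ∧ ∀ u : α → 𝔽, ∃ w ∈ W, Set.EqOn w u P := by
  classical
  obtain ⟨P, hP, hmax⟩ := Finset.exists_max_image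
    (Finset.univ.filter fun P : Finset α => ∀ u : α → 𝔽, ∃ w ∈ W, Set.EqOn w u P)
    Finset.card ⟨∅, by simpa using ⟨0, W.zero_mem⟩⟩
  simp only [Finset.mem_filter, Finset.mem_univ, true_and] at hP hmax
  refine ⟨P, ?_, hP⟩
  let r : W →ₗ[𝔽] (P → 𝔽) := (LinearMap.pi fun a : P => LinearMap.proj a.1) ∘ₗ W.subtype
  suffices hr : Function.Injective r by
    simpa using LinearMap.finrank_le_finrank_of_injective hr
  rw [← LinearMap.ker_eq_bot, eq_bot_iff]
  rintro ⟨w, hwW⟩ hw0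
  have hwP : ∀ a ∈ P, w a = 0 := fun a ha => congrFun hw0 ⟨a, ha⟩
  by_contra hne
  obtain ⟨b, hb⟩ : ∃ b, w b ≠ 0 := by
    by_contra! h
    exact hne (Subtype.ext (funext h))
  have hbP : b ∉ P := fun hbP => hb (hwP b hbP)
  -- a vector nonzero at `b` and vanishing on `P` lets us also prescribe the value at `b`
  refine (hmax (insert b P) fun u => ?_).not_gt (by simp [hbP])
  obtain ⟨v, hvW, hv⟩ := hP u
  refine ⟨v + ((u b - v b) / w b) • w, W.add_mem hvW (W.smul_mem _ hwW), fun a ha => ?_⟩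
  rcases Finset.mem_insert.1 ha with rfl | haP
  · simp [div_mul_cancel₀ _ hb]
  · simp [hv haP, hwP a haP]

theorem exists_mem_finrank_le_card_support [DecidableEq 𝔽] (W : Submodule 𝔽 (α → 𝔽)) :
    ∃ φ ∈ W, finrank 𝔽 W ≤ Fintype.card {a // φ a ≠ 0} := by
  obtain ⟨P, hPW, hP⟩ := W.exists_finrank_le_card_forall_exists_mem_eqOn
  obtain ⟨φ, hφW, hφ⟩ := hP 1
  refine ⟨φ, hφW, hPW.trans ?_⟩
  rw [Fintype.card_subtype]
  exact Finset.card_le_card fun a ha => by simp [hφ ha]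

end Submodule

section Contraction

variable {α β γ 𝔽 : Type*} [Fintype γ] [Field 𝔽]

def contractLast (t : α → β → γ → 𝔽) (φ : γ → 𝔽) : Matrix α β 𝔽 :=
  of fun p q => ∑ r, t p q r * φ r

theorem contractLast_sum {ι : Type*} (s : Finset ι) (t : ι → α → β → γ → 𝔽) (φ : γ → 𝔽) :
    contractLast (fun p q r => ∑ i ∈ s, t i p q r) φ = ∑ i ∈ s, contractLast (t i) φ := by
  ext p q
  simp only [contractLast, of_apply, Matrix.sum_apply, Finset.sum_mul]
  exact Finset.sum_comm

theorem contractLast_eq_zero {t : α → β → γ → 𝔽} {f : α → β → 𝔽} {g : γ → 𝔽}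
    (ht : ∀ x y z, t x y z = f x y * g z) {φ : γ → 𝔽} (hφ : ∑ r, g r * φ r = 0) :
    contractLast t φ = 0 := by
  ext p q
  simp [contractLast, ht, mul_assoc, ← Finset.mul_sum, hφ]

theorem rank_contractLast_le_one [Fintype β] {t : α → β → γ → 𝔽}
    (ht : (∃ (f : α → γ → 𝔽) (g : β → 𝔽), ∀ x y z, t x y z = f x z * g y) ∨
      (∃ (f : β → γ → 𝔽) (g : α → 𝔽), ∀ x y z, t x y z = f y z * g x))
    (φ : γ → 𝔽) : (contractLast t φ).rank ≤ 1 := by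
  rcases ht with ⟨f, g, ht⟩ | ⟨f, g, ht⟩
  · convert rank_vecMulVec_le (fun p => ∑ r, f p r * φ r) g
    ext p q
    simp [contractLast, ht, vecMulVec_apply, Finset.sum_mul, mul_right_comm]
  · convert rank_vecMulVec_le g (fun q => ∑ r, f q r * φ r)
    ext p q
    simp [contractLast, ht, vecMulVec_apply, Finset.mul_sum, mul_comm, mul_left_comm]

theorem contractLast_diagonal [Fintype α] [DecidableEq α] (d : α → 𝔽) (φ : α → 𝔽) :
    contractLast (fun p q r => if p = q ∧ q = r then d p else 0) φ = diagonal (d * φ) := by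
  ext p q
  by_cases hpq : p = q
  · subst hpq; simp [contractLast]
  · simp [contractLast, hpq]

theorem rank_sum_contractLast_le {ι : Type*} [Fintype ι] [DecidableEq ι] [Fintype β]
    {t : ι → α → β → γ → 𝔽} (I : Finset ι) (g : ι → γ → 𝔽)
    (hI : ∀ i ∈ I, ∃ f : α → β → 𝔽, ∀ x y z, t i x y z = f x y * g i z)
    (hIc : ∀ i ∉ I, (∃ (f : α → γ → 𝔽) (g : β → 𝔽), ∀ x y z, t i x y z = f x z * g y) ∨
      (∃ (f : β → γ → 𝔽) (g : α → 𝔽), ∀ x y z, t i x y z = f y z * g x))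
    {φ : γ → 𝔽} (hφ : ∀ i ∈ I, ∑ r, g i r * φ r = 0) :
    (∑ i, contractLast (t i) φ).rank ≤ Iᶜ.card := by
  calc (∑ i, contractLast (t i) φ).rank
      ≤ ∑ i, (contractLast (t i) φ).rank := rank_sum_le _ _
    _ ≤ ∑ i, if i ∈ I then 0 else 1 := by
      refine Finset.sum_le_sum fun i _ => ?_
      split_ifs with hi
      · obtain ⟨f, hf⟩ := hI i hi
        rw [contractLast_eq_zero hf (hφ i hi), rank_zero]
      · exact rank_contractLast_le_one (hIc i hi) φ
    _ = Iᶜ.card := by simp [Finset.sum_ite, Finset.filter_not, Finset.compl_eq_univ_sdiff]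

end Contraction

theorem card_le_of_diagonal_eq_sum_sliceTerms {α ι 𝔽 : Type*} [Fintype α] [DecidableEq α]
    [Fintype ι] [Field 𝔽] {d : α → 𝔽} (hd : ∀ p, d p ≠ 0) {t : ι → α → α → α → 𝔽}
    (ht : ∀ i, IsSliceTerm (t i))
    (hT : ∀ p q r, (if p = q ∧ q = r then d p else 0) = ∑ i, t i p q r) :
    Fintype.card α ≤ Fintype.card ι := by
  classical
  let I := Finset.univ.filter fun i =>
    ∃ (f : α → α → 𝔽) (g : α → 𝔽), ∀ x y z, t i x y z = f x y * g z
  have hfactor : ∀ i, ∃ g : α → 𝔽,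
      i ∈ I → ∃ f : α → α → 𝔽, ∀ x y z, t i x y z = f x y * g z := by
    intro i
    by_cases hi : i ∈ I
    · obtain ⟨f, g, h⟩ := (Finset.mem_filter.1 hi).2
      exact ⟨g, fun _ => ⟨f, h⟩⟩
    · exact ⟨0, fun h => absurd h hi⟩
  choose g hg using hfactor
  let L : (α → 𝔽) →ₗ[𝔽] (I → 𝔽) := mulVecLin (of fun (i : I) r => g i r)
  obtain ⟨φ, hφL, hφ⟩ := (LinearMap.ker L).exists_mem_finrank_le_card_support
  have hker : Fintype.card α ≤ I.card + finrank 𝔽 (LinearMap.ker L) := by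
    have hsum := L.finrank_range_add_finrank_ker
    have hrange := (LinearMap.range L).finrank_le
    rw [finrank_fintype_fun_eq_card] at hsum hrange
    rw [Fintype.card_coe] at hrange
    omega
  have hrank : (diagonal (d * φ)).rank ≤ Iᶜ.card := by
    have hT' : (fun p q r => if p = q ∧ q = r then d p else 0) =
        fun p q r => ∑ i ∈ Finset.univ, t i p q r :=
      funext₃ hT
    rw [← contractLast_diagonal, hT', contractLast_sum]
    refine rank_sum_contractLast_le I g hg
      (fun i hi => (ht i).resolve_left fun h => hi (by simpa [I] using h)) fun i hi => ?_
    simpa [L, mulVec, dotProduct] using congrFun (LinearMap.mem_ker.1 hφL) ⟨i, hi⟩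
  have hsupp : Fintype.card {p // (d * φ) p ≠ 0} = Fintype.card {p // φ p ≠ 0} := by
    simp [hd]
  rw [rank_diagonal, hsupp] at hrank
  have hcompl := Finset.card_compl I
  have hle := I.card_le_univ
  omega

theorem IsTricoloredSumFree.add_add_eq_zero_iff {H : Type*} [AddCommGroup H]
    {M : Finset (H × H × H)} (hM : IsTricoloredSumFree M) {p q r : H × H × H}
    (hp : p ∈ M) (hq : q ∈ M) (hr : r ∈ M) :
    p.1 + q.2.1 + r.2.2 = 0 ↔ p = q ∧ q = r := by
  refine ⟨hM.2 p hp q hq r hr, ?_⟩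
  rintro ⟨rfl, rfl⟩
  exact hM.1 p hp

/-- If `M` is a tricolored sum-free set in a finite abelian group `H`, then
`|M| ≤ slicerank D_H`, where `D_H (x,y,z) = [x + y + z = 0]`. -/
theorem card_tricolored_le_sliceRank {H 𝔽 : Type*} [AddCommGroup H] [Fintype H]
    [DecidableEq H] [Field 𝔽] (M : Finset (H × H × H)) (hM : IsTricoloredSumFree M) :
    M.card ≤ sliceRank (fun x y z : H => if x + y + z = 0 then (1 : 𝔽) else 0) := by
  refine le_sliceRank fun k t ht hT => ?_
  have hdiag : ∀ p q r : M, (if p = q ∧ q = r then (1 : 𝔽) else 0) =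
      ∑ i, t i p.1.1 q.1.2.1 r.1.2.2 := by
    intro p q r
    rw [← hT]
    simp only [hM.add_add_eq_zero_iff p.2 q.2 r.2, Subtype.ext_iff]
  simpa using card_le_of_diagonal_eq_sum_sliceTerms (fun _ => one_ne_zero)
    (fun i => (ht i).comp _ _ _) hdiag
end

section
/- For fixed α ∈ (0,1/2), the function m ↦ I(m,α) = sup_{θ<0}(αθ − log G(θ,1/m)) is increasing in m, where G(t,x) = (1 − e^{t(1+x)})/((1+1/x)(1 − e^{tx})). Equivalently, for fixed t < 0, G(t,x) is increasing in x > 0. -/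
/-!
With `h u = (1 - e^{-u}) / u` and `s = -t > 0`, one has `G(t, x) = h(s x + s) / h(s x)`.
Since `(log h)' u = 1 / (e^u - 1) - 1 / u` is strictly increasing (its derivative has the sign of
`(e^u - 1)^2 - u^2 e^u = e^u ((2 sinh (u/2))^2 - u^2) > 0`), `log h` is strictly convex, so its
increments over intervals of fixed length `s` strictly increase; hence `G(t, ·)` is strictly
increasing. Taking `x = 1/m`, `-log G(θ, 1/m)` increases with `m` pointwise in `θ`, and so does
the supremum, which is finite because `G(θ, x) ≥ x / (1 + x)`.
-/

open Real Set

lemma one_sub_exp_pos {v : ℝ} (hv : v < 0) : 0 < 1 - exp v :=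
  sub_pos.mpr (exp_lt_one_iff.mpr hv)

lemma sq_mul_exp_lt_exp_sub_one_sq {u : ℝ} (hu : 0 < u) : u ^ 2 * exp u < (exp u - 1) ^ 2 := by
  have hsinh : u < 2 * sinh (u / 2) := by linarith [self_lt_sinh_iff.mpr (half_pos hu)]
  have hexp : exp (u / 2) ^ 2 = exp u := by rw [sq, ← exp_add, add_halves]
  have hfactor : exp u - 1 = 2 * sinh (u / 2) * exp (u / 2) := by
    rw [sinh_eq, ← hexp, exp_neg]
    field_simp
  calc u ^ 2 * exp u = (u * exp (u / 2)) ^ 2 := by rw [mul_pow, hexp]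
    _ < (2 * sinh (u / 2) * exp (u / 2)) ^ 2 := by gcongr
    _ = (exp u - 1) ^ 2 := by rw [hfactor]

lemma strictMonoOn_inv_exp_sub_one_sub_inv :
    StrictMonoOn (fun u : ℝ => (exp u - 1)⁻¹ - u⁻¹) (Ioi 0) := by
  have hderiv (u : ℝ) (hu : 0 < u) : HasDerivAt (fun u : ℝ => (exp u - 1)⁻¹ - u⁻¹)
      (-exp u / (exp u - 1) ^ 2 - -(u ^ 2)⁻¹) u :=
    ((hasDerivAt_exp u).sub_const 1).fun_inv (sub_pos.mpr (one_lt_exp_iff.mpr hu)).ne'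
      |>.fun_sub (hasDerivAt_inv hu.ne')
  refine strictMonoOn_of_deriv_pos (convex_Ioi 0)
    (fun u hu => (hderiv u hu).continuousAt.continuousWithinAt) fun u hu => ?_
  rw [interior_Ioi, mem_Ioi] at hu
  have hpos : 0 < exp u - 1 := sub_pos.mpr (one_lt_exp_iff.mpr hu)
  rw [(hderiv u hu).deriv, show -exp u / (exp u - 1) ^ 2 - -(u ^ 2)⁻¹
      = ((exp u - 1) ^ 2 - u ^ 2 * exp u) / (u ^ 2 * (exp u - 1) ^ 2) by field_simp; ring]
  have := sq_mul_exp_lt_exp_sub_one_sq hu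
  exact div_pos (by linarith) (by positivity)

theorem StrictConvexOn.apply_add_sub_apply_lt {𝕜 : Type*} [Field 𝕜] [LinearOrder 𝕜]
    [IsStrictOrderedRing 𝕜] {s : Set 𝕜} {f : 𝕜 → 𝕜} (hf : StrictConvexOn 𝕜 s f) {a b d : 𝕜}
    (ha : a ∈ s) (hbd : b + d ∈ s) (hab : a < b) (hd : 0 < d) :
    f (a + d) - f a < f (b + d) - f b := by
  have hb : b ∈ s := hf.1.ordConnected.out ha hbd ⟨hab.le, by linarith⟩
  have had : a + d ∈ s := hf.1.ordConnected.out ha hbd ⟨by linarith, by linarith⟩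
  have h₁ := hf.secant_strict_mono ha had hbd (by linarith) (by linarith) (by linarith)
  have h₂ := hf.secant_strict_mono hbd ha hb (by linarith) (by linarith) hab
  rw [← neg_div_neg_eq (f a - _), ← neg_div_neg_eq (f b - _)] at h₂
  simp only [neg_sub, add_sub_cancel_left] at h₁ h₂
  exact (div_lt_div_iff_of_pos_right hd).mp (h₁.trans h₂)

theorem csSup_setOf_le_csSup_setOf {α ι : Type*} [ConditionallyCompleteLattice α] {p : ι → Prop}
    {f g : ι → α} (hp : ∃ i, p i) (hg : BddAbove {y | ∃ i, p i ∧ y = g i})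
    (hfg : ∀ i, p i → f i ≤ g i) :
    sSup {y | ∃ i, p i ∧ y = f i} ≤ sSup {y | ∃ i, p i ∧ y = g i} := by
  obtain ⟨i₀, hi₀⟩ := hp
  refine csSup_le ⟨f i₀, i₀, hi₀, rfl⟩ ?_
  rintro _ ⟨i, hi, rfl⟩
  exact (hfg i hi).trans (le_csSup hg ⟨i, hi, rfl⟩)

namespace InstabilityRate

noncomputable def h (u : ℝ) : ℝ := (1 - exp (-u)) / u

lemma h_pos {u : ℝ} (hu : 0 < u) : 0 < h u :=
  div_pos (one_sub_exp_pos (neg_neg_of_pos hu)) hu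

lemma hasDerivAt_log_h {u : ℝ} (hu : 0 < u) :
    HasDerivAt (fun u => log (h u)) ((exp u - 1)⁻¹ - u⁻¹) u := by
  have hh : HasDerivAt h ((-(exp (-u) * -1) * u - (1 - exp (-u)) * 1) / u ^ 2) u :=
    ((hasDerivAt_neg u).exp.const_sub 1).fun_div (hasDerivAt_id' u) hu.ne'
  refine (hh.log (h_pos hu).ne').congr_deriv ?_
  have hnum : 1 - exp (-u) ≠ 0 := (one_sub_exp_pos (neg_neg_of_pos hu)).ne'
  have hexp : exp u - 1 ≠ 0 := (sub_pos.mpr (one_lt_exp_iff.mpr hu)).ne'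
  simp only [h, exp_neg] at hnum ⊢
  field_simp

lemma strictConvexOn_log_h : StrictConvexOn ℝ (Ioi 0) (fun u => log (h u)) := by
  refine StrictMonoOn.strictConvexOn_of_deriv (convex_Ioi 0)
    (fun _ hu => (hasDerivAt_log_h hu).continuousAt.continuousWithinAt) ?_
  rw [interior_Ioi]
  exact strictMonoOn_inv_exp_sub_one_sub_inv.congr fun u hu => (hasDerivAt_log_h hu).deriv.symm

noncomputable def G (t x : ℝ) : ℝ := (1 - exp (t * (1 + x))) / ((1 + 1 / x) * (1 - exp (t * x)))

lemma G_eq_h_div_h {t x : ℝ} (ht : t < 0) (hx : 0 < x) :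
    G t x = h (-t * (1 + x)) / h (-t * x) := by
  have h₁ : 1 - exp (t * x) ≠ 0 := (one_sub_exp_pos (mul_neg_of_neg_of_pos ht hx)).ne'
  have h₂ : 1 + x ≠ 0 := by positivity
  have h₃ : t ≠ 0 := ht.ne
  simp only [G, h, neg_mul, neg_neg]
  field_simp
  ring

lemma G_pos {t x : ℝ} (ht : t < 0) (hx : 0 < x) : 0 < G t x := by
  have hs : 0 < -t := neg_pos.mpr ht
  rw [G_eq_h_div_h ht hx]
  exact div_pos (h_pos (by positivity)) (h_pos (by positivity))

lemma strictMonoOn_G {t : ℝ} (ht : t < 0) : StrictMonoOn (G t) (Ioi 0) := by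
  intro x₁ (hx₁ : 0 < x₁) x₂ (hx₂ : 0 < x₂) hlt
  have hs : 0 < -t := neg_pos.mpr ht
  rw [← log_lt_log_iff (G_pos ht hx₁) (G_pos ht hx₂), G_eq_h_div_h ht hx₁, G_eq_h_div_h ht hx₂,
    log_div (h_pos (by positivity)).ne' (h_pos (by positivity)).ne',
    log_div (h_pos (by positivity)).ne' (h_pos (by positivity)).ne', mul_one_add, mul_one_add,
    add_comm (-t), add_comm (-t)]
  exact strictConvexOn_log_h.apply_add_sub_apply_lt (mem_Ioi.mpr (by positivity))
    (mem_Ioi.mpr (by positivity)) (mul_lt_mul_of_pos_left hlt hs) hs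

lemma inv_one_add_one_div_le_G {t x : ℝ} (ht : t < 0) (hx : 0 < x) : (1 + 1 / x)⁻¹ ≤ G t x := by
  have h₁ : 0 < 1 - exp (t * x) := one_sub_exp_pos (mul_neg_of_neg_of_pos ht hx)
  have h₂ : exp (t * (1 + x)) ≤ exp (t * x) := exp_le_exp.mpr (by nlinarith)
  rw [G, le_div_iff₀ (by positivity), inv_mul_cancel_left₀ (by positivity)]
  linarith

lemma bddAbove_setOf_sub_log_G {α x : ℝ} (hα : 0 ≤ α) (hx : 0 < x) :
    BddAbove {y | ∃ θ : ℝ, θ < 0 ∧ y = α * θ - log (G θ x)} := by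
  refine ⟨log (1 + 1 / x), ?_⟩
  rintro _ ⟨θ, hθ, rfl⟩
  have hlog := log_le_log (by positivity) (inv_one_add_one_div_le_G hθ hx)
  rw [log_inv] at hlog
  nlinarith

end InstabilityRate

open InstabilityRate

/-- For fixed `α ∈ (0,1/2)`, the function
`m ↦ I(m,α) = sup_{θ<0}(αθ − log G(θ,1/m))` is increasing in `m`, where
`G(t,x) = (1 − e^{t(1+x)})/((1+1/x)(1 − e^{tx}))`. Equivalently, for fixed
`t < 0`, `G(t,x)` is increasing in `x > 0`. -/
theorem instability_rate_monotone (α : ℝ) (hα : α ∈ Set.Ioo (0 : ℝ) (1 / 2)) :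
    (∀ m₁ m₂ : ℕ, 1 ≤ m₁ → m₁ ≤ m₂ →
      sSup {y : ℝ | ∃ θ : ℝ, θ < 0 ∧
          y = α * θ - Real.log ((1 - Real.exp (θ * (1 + 1 / m₁))) /
            ((1 + 1 / (1 / (m₁ : ℝ))) * (1 - Real.exp (θ * (1 / m₁)))))} ≤
      sSup {y : ℝ | ∃ θ : ℝ, θ < 0 ∧
          y = α * θ - Real.log ((1 - Real.exp (θ * (1 + 1 / m₂))) /
            ((1 + 1 / (1 / (m₂ : ℝ))) * (1 - Real.exp (θ * (1 / m₂)))))}) ∧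
    (∀ t : ℝ, t < 0 → ∀ x₁ x₂ : ℝ, 0 < x₁ → x₁ < x₂ →
      (1 - Real.exp (t * (1 + x₁))) / ((1 + 1 / x₁) * (1 - Real.exp (t * x₁))) <
      (1 - Real.exp (t * (1 + x₂))) / ((1 + 1 / x₂) * (1 - Real.exp (t * x₂)))) := by
  refine ⟨fun m₁ m₂ hm₁ hm₂ => ?_,
    fun t ht x₁ x₂ hx₁ hlt => strictMonoOn_G ht hx₁ (hx₁.trans hlt) hlt⟩
  have hm₁ : (0 : ℝ) < m₁ := by exact_mod_cast hm₁
  have hm₂ : (m₁ : ℝ) ≤ m₂ := by exact_mod_cast hm₂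
  have hx₂ : (0 : ℝ) < 1 / m₂ := one_div_pos.mpr (hm₁.trans_le hm₂)
  have hx : 1 / (m₂ : ℝ) ≤ 1 / m₁ := one_div_le_one_div_of_le hm₁ hm₂
  refine csSup_setOf_le_csSup_setOf (p := fun θ : ℝ => θ < 0)
    (f := fun θ => α * θ - log (G θ (1 / m₁))) (g := fun θ => α * θ - log (G θ (1 / m₂)))
    ⟨-1, neg_one_lt_zero⟩ (bddAbove_setOf_sub_log_G hα.1.le hx₂) fun θ hθ => ?_
  have hG := (strictMonoOn_G hθ).monotoneOn hx₂ (hx₂.trans_le hx) hx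
  exact sub_le_sub_left (log_le_log (G_pos hθ hx₂) hG) _
end
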